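/- arXiv:2412.01603 — 2 statements merged into one kernel-verified Lean document; each statement's English description precedes it below -/
import Mathlib

section
/- Anti-concentration of a noncentral chi-square with one degree of freedom: if g is a standard normal random variable, then for every ν ∈ ℝ and every t > 0, sup_{z ∈ ℝ} P( | (g + ν)² − z | ≤ t ) ≤ 2 √(t/π). -/
open MeasureTheory ProbabilityTheory

/-- **Anti-concentration of a noncentral chi-square with one degree of freedom.**
If `g` is a standard normal random variable (its law is `gaussianReal 0 1`), then for every
`ν ∈ ℝ` and every `t > 0`, `sup_{z ∈ ℝ} P(|(g + ν)² − z| ≤ t) ≤ 2 √(t/π)`. -/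
theorem stmt_6 (ν : ℝ) (t : ℝ) (ht : 0 < t) (z : ℝ) :
    ((gaussianReal 0 1) {x : ℝ | |(x + ν) ^ 2 - z| ≤ t}).toReal ≤
      2 * Real.sqrt (t / Real.pi) := by
  set a : ℝ := Real.sqrt (max (z - t) 0) with ha
  set b : ℝ := Real.sqrt (z + t) with hb
  have ha0 : 0 ≤ a := Real.sqrt_nonneg _
  have hb0 : 0 ≤ b := Real.sqrt_nonneg _
  have hab : a ≤ b := by
    rcases le_or_gt 0 (z + t) with h | h
    · exact Real.sqrt_le_sqrt (max_le (by linarith) h)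
    · have h1 : max (z - t) 0 = 0 := max_eq_right (by linarith)
      rw [ha, h1, Real.sqrt_zero]
      exact hb0
  have ha2 : a ^ 2 = max (z - t) 0 := Real.sq_sqrt (le_max_right _ _)
  -- length bound : b - a ≤ √(2t)
  have hba : b ≤ a + Real.sqrt (2 * t) := by
    have h1 : b ≤ Real.sqrt (a ^ 2 + 2 * t) := by
      apply Real.sqrt_le_sqrt
      rw [ha2]
      have := le_max_left (z - t) 0
      linarith
    refine h1.trans (Real.sqrt_le_iff.mpr ⟨by positivity, ?_⟩)
    have h2 : Real.sqrt (2 * t) ^ 2 = 2 * t := Real.sq_sqrt (by positivity)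
    nlinarith [Real.sqrt_nonneg (2 * t)]
  -- the set is contained in two intervals
  have hsub : {x : ℝ | |(x + ν) ^ 2 - z| ≤ t} ⊆
      Set.Icc (-b - ν) (-a - ν) ∪ Set.Icc (a - ν) (b - ν) := by
    intro x hx
    simp only [Set.mem_setOf_eq, abs_le] at hx
    have hub : |x + ν| ≤ b := Real.abs_le_sqrt (by linarith)
    have hlb : a ≤ |x + ν| := by
      rw [ha, ← Real.sqrt_sq (abs_nonneg (x + ν))]
      apply Real.sqrt_le_sqrt
      rw [sq_abs]
      exact max_le (by linarith) (sq_nonneg _)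
    rcases abs_cases (x + ν) with ⟨he, _⟩ | ⟨he, _⟩
    · right
      rw [he] at hub hlb
      constructor <;> linarith
    · left
      rw [he] at hub hlb
      constructor <;> linarith
  -- density bound
  have hpdf : ∀ x : ℝ, gaussianPDF 0 1 x ≤ ENNReal.ofReal ((Real.sqrt (2 * Real.pi))⁻¹) := by
    intro x
    apply ENNReal.ofReal_le_ofReal
    rw [gaussianPDFReal_def]
    simp only [NNReal.coe_one, mul_one]
    exact mul_le_of_le_one_right (by positivity)
      (Real.exp_le_one_iff.mpr (by nlinarith [sq_nonneg (x - 0)]))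
  -- measure of an interval
  have hIcc : ∀ l u : ℝ, gaussianReal 0 1 (Set.Icc l u) ≤
      ENNReal.ofReal ((Real.sqrt (2 * Real.pi))⁻¹) * ENNReal.ofReal (u - l) := by
    intro l u
    rw [gaussianReal_apply 0 one_ne_zero]
    calc ∫⁻ x in Set.Icc l u, gaussianPDF 0 1 x
        ≤ ∫⁻ _ in Set.Icc l u, ENNReal.ofReal ((Real.sqrt (2 * Real.pi))⁻¹) :=
          lintegral_mono fun x => hpdf x
      _ = ENNReal.ofReal ((Real.sqrt (2 * Real.pi))⁻¹) * volume (Set.Icc l u) := by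
          rw [setLIntegral_const]
      _ = ENNReal.ofReal ((Real.sqrt (2 * Real.pi))⁻¹) * ENNReal.ofReal (u - l) := by
          rw [Real.volume_Icc]
  have key : gaussianReal 0 1 {x : ℝ | |(x + ν) ^ 2 - z| ≤ t} ≤
      ENNReal.ofReal (2 * Real.sqrt (t / Real.pi)) := by
    calc gaussianReal 0 1 {x : ℝ | |(x + ν) ^ 2 - z| ≤ t}
        ≤ gaussianReal 0 1 (Set.Icc (-b - ν) (-a - ν) ∪ Set.Icc (a - ν) (b - ν)) :=
          measure_mono hsub
      _ ≤ gaussianReal 0 1 (Set.Icc (-b - ν) (-a - ν)) +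
            gaussianReal 0 1 (Set.Icc (a - ν) (b - ν)) := measure_union_le _ _
      _ ≤ ENNReal.ofReal ((Real.sqrt (2 * Real.pi))⁻¹) * ENNReal.ofReal ((-a - ν) - (-b - ν)) +
            ENNReal.ofReal ((Real.sqrt (2 * Real.pi))⁻¹) * ENNReal.ofReal ((b - ν) - (a - ν)) :=
          add_le_add (hIcc _ _) (hIcc _ _)
      _ = ENNReal.ofReal ((Real.sqrt (2 * Real.pi))⁻¹ * (b - a)) +
            ENNReal.ofReal ((Real.sqrt (2 * Real.pi))⁻¹ * (b - a)) := by
          rw [← ENNReal.ofReal_mul (by positivity), ← ENNReal.ofReal_mul (by positivity)]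
          ring_nf
      _ ≤ ENNReal.ofReal (2 * Real.sqrt (t / Real.pi)) := by
          rw [← ENNReal.ofReal_add (mul_nonneg (by positivity) (by linarith))
            (mul_nonneg (by positivity) (by linarith))]
          apply ENNReal.ofReal_le_ofReal
          have hc : (Real.sqrt (2 * Real.pi))⁻¹ * Real.sqrt (2 * t) = Real.sqrt (t / Real.pi) := by
            rw [← Real.sqrt_inv, ← Real.sqrt_mul (by positivity)]
            congr 1
            field_simp
          have hcpos : (0:ℝ) < (Real.sqrt (2 * Real.pi))⁻¹ := by positivity
          nlinarith [hcpos.le]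
  exact ENNReal.toReal_le_of_le_ofReal (by positivity) key
end

section
/- Lipschitz continuity in the threshold of the Gaussian-smoothed ramp: define, for y ∈ ℝ and δ > 0, the ramp function ψ_{y,δ} : ℝ → ℝ by ψ_{y,δ}(u) = 1 for u ≤ y + 3δ, ψ_{y,δ}(u) = 1 − (u − y − 3δ)/δ for y + 3δ ≤ u ≤ y + 4δ, and ψ_{y,δ}(u) = 0 for u ≥ y + 4δ. Then there exists a universal constant C such that for every δ > 0, h > 0, x ∈ ℝ, and all y₁ ≤ y₂ with y₂ ≤ y₁ + δ: E[ | ψ_{y₂,δ}(x + hN) − ψ_{y₁,δ}(x + hN) | · (N² + 1) ] ≤ C (y₂ − y₁) / h, where N is a standard normal random variable. -/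
/-!
The difference `ψ_{y₂,δ} - ψ_{y₁,δ}` is at most `(y₂ - y₁)/δ` and vanishes outside
`[y₁ + 3δ, y₂ + 4δ]`, an interval of length `y₂ - y₁ + δ ≤ 2δ`. Since the standard Gaussian density
times `u² + 1` is at most `1`, the expectation is bounded by the Lebesgue integral of
`(y₂ - y₁)/δ` over the preimage of that interval under `u ↦ x + h u`, which is
`(y₂ - y₁)(y₂ - y₁ + δ)/(δ h) ≤ 2 (y₂ - y₁)/h`.
-/

open MeasureTheory ProbabilityTheory

/-- The Gaussian-smoothed ramp's underlying piecewise-linear function: `ψ_{y,δ}(u)` equals `1`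
for `u ≤ y + 3δ`, decreases linearly from `1` to `0` on `[y + 3δ, y + 4δ]`, and equals `0` for
`u ≥ y + 4δ`. -/
noncomputable def ramp (y δ u : ℝ) : ℝ :=
  max 0 (min 1 (1 - (u - y - 3 * δ) / δ))

open Real Set

section Ramp

variable {y δ v : ℝ}

lemma ramp_of_le (hδ : 0 ≤ δ) (hv : v ≤ y + 3 * δ) : ramp y δ v = 1 := by
  have : (v - y - 3 * δ) / δ ≤ 0 := div_nonpos_of_nonpos_of_nonneg (by linarith) hδ
  rw [ramp, min_eq_left (by linarith), max_eq_right zero_le_one]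

lemma ramp_of_ge (hδ : 0 < δ) (hv : y + 4 * δ ≤ v) : ramp y δ v = 0 := by
  have : 1 ≤ (v - y - 3 * δ) / δ := by rw [le_div_iff₀ hδ]; linarith
  rw [ramp, max_eq_left ((min_le_right _ _).trans (by linarith))]

lemma abs_ramp_sub_ramp_le (y₁ y₂ δ v : ℝ) :
    |ramp y₂ δ v - ramp y₁ δ v| ≤ |y₂ - y₁| / |δ| := by
  have hlin : (1 - (v - y₂ - 3 * δ) / δ) - (1 - (v - y₁ - 3 * δ) / δ) = (y₂ - y₁) / δ := by ring
  rw [ramp, ramp, max_comm 0, max_comm 0]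
  calc _
      ≤ |min 1 (1 - (v - y₂ - 3 * δ) / δ) - min 1 (1 - (v - y₁ - 3 * δ) / δ)| :=
        abs_max_sub_max_le_abs _ _ _
    _ ≤ max |(1 : ℝ) - 1| |(1 - (v - y₂ - 3 * δ) / δ) - (1 - (v - y₁ - 3 * δ) / δ)| :=
        abs_min_sub_min_le_max _ _ _ _
    _ = |y₂ - y₁| / |δ| := by
        rw [hlin, sub_self, abs_zero, abs_div, max_eq_right (by positivity)]

lemma abs_ramp_sub_ramp_le_indicator {y₁ y₂ : ℝ} (hδ : 0 < δ) (h₁₂ : y₁ ≤ y₂) (v : ℝ) :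
    |ramp y₂ δ v - ramp y₁ δ v| ≤
      (Icc (y₁ + 3 * δ) (y₂ + 4 * δ)).indicator (fun _ ↦ (y₂ - y₁) / δ) v := by
  by_cases hv : v ∈ Icc (y₁ + 3 * δ) (y₂ + 4 * δ)
  · simpa [indicator_of_mem hv, abs_of_nonneg (sub_nonneg.2 h₁₂), abs_of_pos hδ]
      using abs_ramp_sub_ramp_le y₁ y₂ δ v
  · rw [indicator_of_notMem hv, abs_nonpos_iff, sub_eq_zero]
    rcases not_and_or.1 hv with hv | hv
    · rw [ramp_of_le hδ.le (by linarith), ramp_of_le hδ.le (by linarith)]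
    · rw [ramp_of_ge hδ (by linarith), ramp_of_ge hδ (by linarith)]

end Ramp

lemma gaussianPDFReal_mul_sq_add_one_le (u : ℝ) : gaussianPDFReal 0 1 u * (u ^ 2 + 1) ≤ 1 := by
  have h_sqrt : 2 ≤ √(2 * π) :=
    le_sqrt_of_sq_le (by nlinarith [pi_gt_three])
  have h_exp : u ^ 2 + 1 ≤ 2 * exp (u ^ 2 / 2) := by linarith [add_one_le_exp (u ^ 2 / 2)]
  rw [gaussianPDFReal_def]
  simp only [NNReal.coe_one, mul_one, sub_zero]
  rw [neg_div, exp_neg]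
  have := exp_pos (u ^ 2 / 2)
  rw [mul_assoc, inv_mul_le_iff₀ (by positivity), inv_mul_le_iff₀ this]
  nlinarith

lemma integral_mul_sq_add_one_gaussianReal_le {f g : ℝ → ℝ} (hf : ∀ u, 0 ≤ f u)
    (hg : Integrable g) (hfg : ∀ u, f u ≤ g u) :
    ∫ u, f u * (u ^ 2 + 1) ∂gaussianReal 0 1 ≤ ∫ u, g u := by
  rw [integral_gaussianReal_eq_integral_smul one_ne_zero]
  refine integral_mono_of_nonneg (ae_of_all _ fun u ↦ ?_) hg (ae_of_all _ fun u ↦ ?_)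
  · have := hf u
    have := gaussianPDFReal_nonneg 0 1 u
    positivity
  · calc gaussianPDFReal 0 1 u • (f u * (u ^ 2 + 1))
        = (gaussianPDFReal 0 1 u * (u ^ 2 + 1)) * f u := by rw [smul_eq_mul]; ring
      _ ≤ 1 * g u := mul_le_mul (gaussianPDFReal_mul_sq_add_one_le u) (hfg u) (hf u) zero_le_one
      _ = g u := one_mul _

lemma indicator_comp_const_add_mul_Icc {a b h : ℝ} (c x : ℝ) (hh : 0 < h) :
    (fun u ↦ (Icc a b).indicator (fun _ ↦ c) (x + h * u)) =
      (Icc ((a - x) / h) ((b - x) / h)).indicator (fun _ ↦ c) := by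
  have : (fun u ↦ x + h * u) ⁻¹' Icc a b = Icc ((a - x) / h) ((b - x) / h) := by
    ext u
    simp only [mem_preimage, mem_Icc, div_le_iff₀ hh, le_div_iff₀ hh]
    constructor <;> rintro ⟨h₁, h₂⟩ <;> constructor <;> linarith
  rw [← this]
  rfl

/-- **Lipschitz continuity in the threshold of the Gaussian-smoothed ramp.**
There is a universal constant `C` such that for every `δ > 0`, `h > 0`, `x ∈ ℝ` and all
`y₁ ≤ y₂ ≤ y₁ + δ`,
`E[|ψ_{y₂,δ}(x + hN) − ψ_{y₁,δ}(x + hN)| (N² + 1)] ≤ C (y₂ − y₁)/h`,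
where `N` is standard normal. -/
theorem stmt_15 :
    ∃ C : ℝ, 0 < C ∧
      ∀ (δ h x y₁ y₂ : ℝ), 0 < δ → 0 < h → y₁ ≤ y₂ → y₂ ≤ y₁ + δ →
        ∫ u, |ramp y₂ δ (x + h * u) - ramp y₁ δ (x + h * u)| * (u ^ 2 + 1)
            ∂(gaussianReal 0 1) ≤
          C * (y₂ - y₁) / h := by
  refine ⟨2, two_pos, fun δ h x y₁ y₂ hδ hh h₁₂ h₂₁ ↦ ?_⟩
  have hsupp := indicator_comp_const_add_mul_Icc (a := y₁ + 3 * δ) (b := y₂ + 4 * δ)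
    ((y₂ - y₁) / δ) x hh
  have hlen : (y₁ + 3 * δ - x) / h ≤ (y₂ + 4 * δ - x) / h := by gcongr; linarith
  calc ∫ u, |ramp y₂ δ (x + h * u) - ramp y₁ δ (x + h * u)| * (u ^ 2 + 1) ∂(gaussianReal 0 1)
      ≤ ∫ u, (Icc ((y₁ + 3 * δ - x) / h) ((y₂ + 4 * δ - x) / h)).indicator
          (fun _ ↦ (y₂ - y₁) / δ) u := by
        refine integral_mul_sq_add_one_gaussianReal_le (fun _ ↦ abs_nonneg _)
          ((integrable_indicator_iff measurableSet_Icc).2 (integrableOn_const measure_Icc_lt_top.ne))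
          fun u ↦ ?_
        rw [← hsupp]
        exact abs_ramp_sub_ramp_le_indicator hδ h₁₂ _
    _ = (y₂ - y₁) / δ * ((y₂ - y₁ + δ) / h) := by
        rw [integral_indicator_const _ measurableSet_Icc, volume_real_Icc_of_le hlen, smul_eq_mul,
          mul_comm]
        congr 1
        ring
    _ ≤ 2 * (y₂ - y₁) / h := by
        rw [div_mul_div_comm, div_le_div_iff₀ (by positivity) hh]
        nlinarith [mul_nonneg (mul_nonneg (sub_nonneg.2 h₁₂) hh.le)
          (by linarith : 0 ≤ δ - (y₂ - y₁))]
end
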